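/- arXiv:2008.09805 — 6 statements merged into one kernel-verified Lean document; each statement's English description precedes it below -/
import Mathlib

section
/- Let ρ : [a₁, a₂] → ℝ be differentiable with 0 < ρ(s) < 1 for all s in the open interval (a₁, a₂), ρ(a₂) = 1, and ρ'(a₂) > 0. Then there exists δ > 0 such that the improper integral ∫_{a₂-δ}^{a₂} ρ(s)/√(1 - ρ(s)²) ds converges (is finite). -/
open Set MeasureTheory

/-- Lemma 3.7(i): convergence of the improper integral ∫ ρ/√(1-ρ²) near the right
endpoint a₂ where ρ(a₂) = 1 and ρ'(a₂) > 0. -/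
theorem stmt_0 (a₁ a₂ : ℝ) (h : a₁ < a₂) (ρ : ℝ → ℝ)
    (hdiff : DifferentiableOn ℝ ρ (Set.Icc a₁ a₂))
    (hbound : ∀ s ∈ Set.Ioo a₁ a₂, 0 < ρ s ∧ ρ s < 1)
    (hend : ρ a₂ = 1)
    (hder : 0 < derivWithin ρ (Set.Icc a₁ a₂) a₂) :
    ∃ δ > 0, MeasureTheory.IntegrableOn
      (fun s => ρ s / Real.sqrt (1 - ρ s ^ 2)) (Set.Ioo (a₂ - δ) a₂) := by
  set L := derivWithin ρ (Set.Icc a₁ a₂) a₂ with hLdef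
  have hmem : a₂ ∈ Set.Icc a₁ a₂ := ⟨h.le, le_rfl⟩
  have hd : HasDerivWithinAt ρ L (Set.Icc a₁ a₂) a₂ :=
    (hdiff a₂ hmem).hasDerivWithinAt
  have htend := hasDerivWithinAt_iff_tendsto_slope.1 hd
  have hev : ∀ᶠ s in nhdsWithin a₂ (Set.Icc a₁ a₂ \ {a₂}), L / 2 < slope ρ a₂ s :=
    htend.eventually (eventually_gt_nhds (by linarith))
  rw [eventually_nhdsWithin_iff, Metric.eventually_nhds_iff] at hev
  obtain ⟨ε, hε, hball⟩ := hev
  set δ := min ε (a₂ - a₁) with hδdef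
  have hδpos : 0 < δ := lt_min hε (by linarith)
  have hδε : δ ≤ ε := min_le_left _ _
  have hδa : δ ≤ a₂ - a₁ := min_le_right _ _
  refine ⟨δ, hδpos, ?_⟩
  have hL2 : 0 < L / 2 := by linarith
  have hsub : Set.Ioo (a₂ - δ) a₂ ⊆ Set.Ioo a₁ a₂ := by
    intro s hs
    exact ⟨by linarith [hs.1], hs.2⟩
  -- key estimate: 1 - ρ s ≥ (L/2)(a₂ - s)
  have hkey : ∀ s ∈ Set.Ioo (a₂ - δ) a₂, L / 2 * (a₂ - s) ≤ 1 - ρ s := by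
    intro s hs
    have hs' : s ∈ Set.Ioo a₁ a₂ := hsub hs
    have hdist : dist s a₂ < ε := by
      rw [Real.dist_eq, abs_of_nonpos (by linarith [hs.2])]
      linarith [hs.1]
    have hslope := hball hdist ⟨⟨hs'.1.le, hs'.2.le⟩, by
      simp only [Set.mem_singleton_iff]; exact ne_of_lt hs.2⟩
    rw [slope_def_field, hend] at hslope
    have hneg : s - a₂ < 0 := by linarith [hs.2]
    have := (lt_div_iff_of_neg hneg).mp hslope
    nlinarith [this]
  -- continuity / measurability of the integrand on the interval
  have hcont : ContinuousOn (fun s => ρ s / Real.sqrt (1 - ρ s ^ 2))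
      (Set.Ioo (a₂ - δ) a₂) := by
    have hρc : ContinuousOn ρ (Set.Ioo (a₂ - δ) a₂) :=
      hdiff.continuousOn.mono (fun s hs => Set.Ioo_subset_Icc_self (hsub hs))
    apply hρc.div
    · exact Real.continuous_sqrt.comp_continuousOn
        (continuousOn_const.sub (hρc.pow 2))
    · intro s hs
      obtain ⟨h0, h1⟩ := hbound s (hsub hs)
      have : 0 < 1 - ρ s ^ 2 := by nlinarith
      exact (Real.sqrt_pos.2 this).ne'
  -- the dominating function
  have hg : IntegrableOn (fun s => (Real.sqrt (L / 2))⁻¹ * (a₂ - s) ^ (-(1/2) : ℝ))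
      (Set.Ioo (a₂ - δ) a₂) := by
    apply Integrable.const_mul
    have h1 : IntervalIntegrable (fun x : ℝ => x ^ (-(1/2) : ℝ)) volume 0 δ :=
      intervalIntegral.intervalIntegrable_rpow' (by norm_num)
    have h2 := h1.comp_sub_left a₂
    rw [intervalIntegrable_iff] at h2
    simp only [sub_zero] at h2
    rw [Set.uIoc_comm, Set.uIoc_of_le (by linarith : a₂ - δ ≤ a₂)] at h2
    exact h2.mono_set Set.Ioo_subset_Ioc_self
  refine hg.mono' (hcont.aestronglyMeasurable measurableSet_Ioo) ?_
  rw [ae_restrict_iff' measurableSet_Ioo]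
  refine Filter.Eventually.of_forall fun s hs => ?_
  obtain ⟨h0, h1⟩ := hbound s (hsub hs)
  have ha₂s : 0 < a₂ - s := by linarith [hs.2]
  have hk := hkey s hs
  have hsq : L / 2 * (a₂ - s) ≤ 1 - ρ s ^ 2 := by nlinarith
  have hfnn : 0 ≤ ρ s / Real.sqrt (1 - ρ s ^ 2) :=
    div_nonneg h0.le (Real.sqrt_nonneg _)
  rw [Real.norm_eq_abs, abs_of_nonneg hfnn]
  have hden : Real.sqrt (L / 2) * Real.sqrt (a₂ - s) ≤ Real.sqrt (1 - ρ s ^ 2) := by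
    rw [← Real.sqrt_mul hL2.le]
    exact Real.sqrt_le_sqrt hsq
  have hdpos : 0 < Real.sqrt (L / 2) * Real.sqrt (a₂ - s) :=
    mul_pos (Real.sqrt_pos.2 hL2) (Real.sqrt_pos.2 ha₂s)
  calc ρ s / Real.sqrt (1 - ρ s ^ 2)
      ≤ 1 / (Real.sqrt (L / 2) * Real.sqrt (a₂ - s)) :=
        div_le_div₀ zero_le_one h1.le hdpos hden
    _ = (Real.sqrt (L / 2))⁻¹ * (a₂ - s) ^ (-(1/2) : ℝ) := by
        rw [Real.rpow_neg ha₂s.le, ← Real.sqrt_eq_rpow, one_div, mul_inv]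
end

section
/- Let ρ : [a₁, a₂] → ℝ be differentiable with 0 < ρ(s) < 1 for all s in (a₁, a₂), ρ(a₁) = 1, and ρ'(a₁) < 0. Then there exists δ > 0 such that the improper integral ∫_{a₁}^{a₁+δ} ρ(s)/√(1 - ρ(s)²) ds converges. -/
open Set MeasureTheory

/-- Lemma 3.7(ii): convergence of the improper integral ∫ ρ/√(1-ρ²) near the left
endpoint a₁ where ρ(a₁) = 1 and ρ'(a₁) < 0. -/
theorem stmt_1 (a₁ a₂ : ℝ) (h : a₁ < a₂) (ρ : ℝ → ℝ)
    (hdiff : DifferentiableOn ℝ ρ (Set.Icc a₁ a₂))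
    (hbound : ∀ s ∈ Set.Ioo a₁ a₂, 0 < ρ s ∧ ρ s < 1)
    (hend : ρ a₁ = 1)
    (hder : derivWithin ρ (Set.Icc a₁ a₂) a₁ < 0) :
    ∃ δ > 0, MeasureTheory.IntegrableOn
      (fun s => ρ s / Real.sqrt (1 - ρ s ^ 2)) (Set.Ioo a₁ (a₁ + δ)) := by
  set L := derivWithin ρ (Set.Icc a₁ a₂) a₁ with hLdef
  set c : ℝ := -L / 2 with hcdef
  have hc : 0 < c := by simp only [hcdef]; linarith
  have hderiv : HasDerivWithinAt ρ L (Set.Icc a₁ a₂) a₁ :=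
    (hdiff a₁ (Set.left_mem_Icc.2 h.le)).hasDerivWithinAt
  have hslope := hasDerivWithinAt_iff_tendsto_slope.1 hderiv
  have hev : ∀ᶠ s in nhdsWithin a₁ (Set.Icc a₁ a₂ \ {a₁}), slope ρ a₁ s < L / 2 :=
    hslope.eventually (Iio_mem_nhds (by linarith))
  obtain ⟨ε, hε, hball⟩ := Metric.mem_nhdsWithin_iff.1 hev
  have hevε : ∀ s, dist s a₁ < ε → s ∈ Set.Icc a₁ a₂ \ {a₁} → slope ρ a₁ s < L / 2 :=
    fun s h1 h2 => hball ⟨Metric.mem_ball.2 h1, h2⟩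
  set δ : ℝ := min ε (a₂ - a₁) with hδdef
  have hδpos : 0 < δ := lt_min hε (by linarith)
  refine ⟨δ, hδpos, ?_⟩
  -- key pointwise bound
  have key : ∀ s ∈ Set.Ioo a₁ (a₁ + δ),
      0 < ρ s ∧ ρ s < 1 ∧ c * (s - a₁) ≤ 1 - ρ s ^ 2 := by
    intro s hs
    obtain ⟨hs1, hs2⟩ := hs
    have hsa₂ : s < a₂ := by
      have := min_le_right ε (a₂ - a₁)
      linarith [hs2, this]
    have hsε : dist s a₁ < ε := by
      rw [Real.dist_eq, abs_of_pos (by linarith)]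
      have := min_le_left ε (a₂ - a₁)
      linarith
    have hmem : s ∈ Set.Icc a₁ a₂ \ {a₁} :=
      ⟨⟨hs1.le, hsa₂.le⟩, by simp [ne_of_gt hs1]⟩
    have hsl := hevε s hsε hmem
    rw [slope_def_field, div_lt_iff₀ (by linarith : (0:ℝ) < s - a₁)] at hsl
    rw [hend] at hsl
    obtain ⟨hρ0, hρ1⟩ := hbound s ⟨hs1, hsa₂⟩
    refine ⟨hρ0, hρ1, ?_⟩
    nlinarith [hsl, hρ0, hρ1]
  -- the dominating function
  set g : ℝ → ℝ := fun s => (Real.sqrt c)⁻¹ * (s - a₁) ^ (-(1/2) : ℝ) with hgdef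
  have hgint : IntegrableOn g (Set.Ioo a₁ (a₁ + δ)) := by
    have h1 : IntervalIntegrable (fun x : ℝ => x ^ (-(1/2) : ℝ)) volume 0 δ :=
      intervalIntegral.intervalIntegrable_rpow' (by norm_num)
    have h2 : IntervalIntegrable (fun x : ℝ => (x - a₁) ^ (-(1/2) : ℝ)) volume a₁ (a₁ + δ) := by
      have := h1.comp_sub_right a₁
      simpa [add_comm] using this
    have h3 := h2.const_mul (Real.sqrt c)⁻¹
    rw [intervalIntegrable_iff_integrableOn_Ioo_of_le (by linarith)] at h3
    exact h3
  -- measurability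
  have hmeas : AEStronglyMeasurable (fun s => ρ s / Real.sqrt (1 - ρ s ^ 2))
      (volume.restrict (Set.Ioo a₁ (a₁ + δ))) := by
    have hsub : Set.Ioo a₁ (a₁ + δ) ⊆ Set.Icc a₁ a₂ := by
      intro s hs
      have := min_le_right ε (a₂ - a₁)
      exact ⟨hs.1.le, by linarith [hs.2]⟩
    have hcont : ContinuousOn (fun s => ρ s / Real.sqrt (1 - ρ s ^ 2))
        (Set.Ioo a₁ (a₁ + δ)) := by
      apply ContinuousOn.div
      · exact (hdiff.continuousOn).mono hsub
      · exact (Real.continuous_sqrt.comp_continuousOn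
          (continuousOn_const.sub (((hdiff.continuousOn).mono hsub).pow 2)))
      · intro s hs
        obtain ⟨hρ0, hρ1, hkey⟩ := key s hs
        have : 0 < 1 - ρ s ^ 2 := by nlinarith
        positivity
    exact hcont.aestronglyMeasurable measurableSet_Ioo
  apply Integrable.mono' hgint hmeas
  rw [ae_restrict_iff' measurableSet_Ioo]
  filter_upwards with s hs
  obtain ⟨hρ0, hρ1, hkey⟩ := key s hs
  have hsa : 0 < s - a₁ := by linarith [hs.1]
  have hpos : 0 < c * (s - a₁) := mul_pos hc hsa
  have h2 : 0 < 1 - ρ s ^ 2 := lt_of_lt_of_le hpos hkey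
  have hnorm : ‖ρ s / Real.sqrt (1 - ρ s ^ 2)‖ = ρ s / Real.sqrt (1 - ρ s ^ 2) := by
    rw [Real.norm_eq_abs, abs_of_nonneg]
    positivity
  rw [hnorm, hgdef]
  have hsq : 0 < Real.sqrt (c * (s - a₁)) := Real.sqrt_pos.2 hpos
  have hle : ρ s / Real.sqrt (1 - ρ s ^ 2) ≤ 1 / Real.sqrt (c * (s - a₁)) :=
    div_le_div₀ zero_le_one hρ1.le hsq (Real.sqrt_le_sqrt hkey)
  refine hle.trans (le_of_eq ?_)
  rw [Real.sqrt_mul hc.le, one_div, mul_inv]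
  simp only
  rw [Real.rpow_neg hsa.le]
  congr 2
  exact Real.sqrt_eq_rpow _
end

section
/- Let a, b : (0, ∞) → ℝ be continuous functions with a'(s) ≥ 0, b'(s) ≥ 0, and a'(s) + b'(s) > 0 for all s > 0. Suppose τ : [0, ∞) → ℝ is a solution of τ' = a·τ + b with τ(0) = 0 and τ(s) > 0 for s > 0. Then τ'(s) > 0 for all s in (0, ∞). -/
open Set

/-- Proposition 4.3(i): a solution τ of τ' = a·τ + b with τ(0) = 0 and τ > 0 on (0,∞),
where a' ≥ 0, b' ≥ 0 and a' + b' > 0, is strictly increasing: τ' > 0 on (0,∞). -/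
theorem stmt_2 (a b τ : ℝ → ℝ)
    (ha_cont : ContinuousOn a (Set.Ioi 0)) (hb_cont : ContinuousOn b (Set.Ioi 0))
    (ha_diff : ∀ s > (0:ℝ), DifferentiableAt ℝ a s)
    (hb_diff : ∀ s > (0:ℝ), DifferentiableAt ℝ b s)
    (ha' : ∀ s > (0:ℝ), 0 ≤ deriv a s) (hb' : ∀ s > (0:ℝ), 0 ≤ deriv b s)
    (hab' : ∀ s > (0:ℝ), 0 < deriv a s + deriv b s)
    (hτc : ContinuousOn τ (Set.Ici 0))
    (hode : ∀ s > (0:ℝ), HasDerivAt τ (a s * τ s + b s) s)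
    (hτ0 : τ 0 = 0) (hτpos : ∀ s > (0:ℝ), 0 < τ s) :
    ∀ s > (0:ℝ), 0 < deriv τ s := by
  intro s hs
  set g : ℝ → ℝ := fun t => a t * τ t + b t with hgdef
  have hderiv : ∀ t > (0:ℝ), deriv τ t = g t := fun t ht => (hode t ht).deriv
  rw [hderiv s hs]
  by_contra hle
  push_neg at hle
  -- g continuous on (0,∞)
  have hτc' : ContinuousOn τ (Ioi 0) := hτc.mono Ioi_subset_Ici_self
  have hgc : ContinuousOn g (Ioi 0) := (ha_cont.mul hτc').add hb_cont
  -- MVT gives c ∈ (0,s) with g c > 0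
  obtain ⟨c, hcmem, hc⟩ := exists_hasDerivAt_eq_slope τ g hs
    (hτc.mono (Icc_subset_Ici_self)) (fun x hx => hode x hx.1)
  have hgc_pos : 0 < g c := by
    rw [hc, hτ0, sub_zero, sub_zero]
    exact div_pos (hτpos s hs) hs
  -- first zero of g in [c, s]
  set S : Set ℝ := Icc c s ∩ g ⁻¹' Iic 0 with hSdef
  have hSclosed : IsClosed S := by
    apply ContinuousOn.preimage_isClosed_of_isClosed (hgc.mono ?_) isClosed_Icc isClosed_Iic
    exact fun x hx => lt_of_lt_of_le hcmem.1 hx.1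
  have hsS : s ∈ S := ⟨⟨le_of_lt hcmem.2, le_refl s⟩, hle⟩
  have hSne : S.Nonempty := ⟨s, hsS⟩
  have hSbdd : BddBelow S := ⟨c, fun x hx => hx.1.1⟩
  set s₀ : ℝ := sInf S with hs₀def
  have hs₀S : s₀ ∈ S := hSclosed.csInf_mem hSne hSbdd
  have hs₀pos : 0 < s₀ := lt_of_lt_of_le hcmem.1 hs₀S.1.1
  have hcs₀ : c < s₀ := by
    rcases lt_or_eq_of_le hs₀S.1.1 with h | h
    · exact h
    · exact absurd (h ▸ hs₀S.2) (not_le.mpr hgc_pos)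
  -- g > 0 on [c, s₀)
  have hgpos : ∀ t, c ≤ t → t < s₀ → 0 < g t := by
    intro t hct hts₀
    by_contra h
    push_neg at h
    have : t ∈ S := ⟨⟨hct, le_trans (le_of_lt hts₀) hs₀S.1.2⟩, h⟩
    exact absurd (csInf_le hSbdd this) (not_le.mpr hts₀)
  -- g s₀ = 0
  have hgca : ContinuousAt g s₀ := hgc.continuousAt (Ioi_mem_nhds hs₀pos)
  have hgs₀0 : g s₀ = 0 := by
    refine le_antisymm hs₀S.2 ?_
    have htend : Filter.Tendsto g (nhdsWithin s₀ (Iio s₀)) (nhds (g s₀)) :=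
      hgca.continuousWithinAt
    refine ge_of_tendsto htend ?_
    filter_upwards [Ioo_mem_nhdsLT_of_mem (⟨hcs₀, le_refl s₀⟩ : s₀ ∈ Ioc c s₀)] with t ht
    exact le_of_lt (hgpos t (le_of_lt ht.1) ht.2)
  -- derivative of g at s₀
  have hτd : HasDerivAt τ (g s₀) s₀ := hode s₀ hs₀pos
  have hgd : HasDerivAt g (deriv a s₀ * τ s₀ + a s₀ * g s₀ + deriv b s₀) s₀ :=
    (((ha_diff s₀ hs₀pos).hasDerivAt.mul hτd).add (hb_diff s₀ hs₀pos).hasDerivAt)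
  set d : ℝ := deriv a s₀ * τ s₀ + a s₀ * g s₀ + deriv b s₀ with hddef
  have hdpos : 0 < d := by
    rw [hddef, hgs₀0, mul_zero, add_zero]
    rcases (hb' s₀ hs₀pos).eq_or_lt with hb0 | hb0
    · have ha0 : 0 < deriv a s₀ := by
        have := hab' s₀ hs₀pos; linarith
      have := mul_pos ha0 (hτpos s₀ hs₀pos)
      linarith
    · have := mul_nonneg (ha' s₀ hs₀pos) (le_of_lt (hτpos s₀ hs₀pos))
      linarith
  -- but the left slope is ≤ 0
  have hslope : Filter.Tendsto (slope g s₀) (nhdsWithin s₀ {s₀}ᶜ) (nhds d) :=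
    hasDerivAt_iff_tendsto_slope.mp hgd
  have hslope' : Filter.Tendsto (slope g s₀) (nhdsWithin s₀ (Iio s₀)) (nhds d) :=
    hslope.mono_left (nhdsWithin_mono _ (fun x hx => ne_of_lt hx))
  have hdle : d ≤ 0 := by
    refine le_of_tendsto hslope' ?_
    filter_upwards [Ioo_mem_nhdsLT_of_mem (⟨hcs₀, le_refl s₀⟩ : s₀ ∈ Ioc c s₀)] with t ht
    have hgt : 0 < g t := hgpos t (le_of_lt ht.1) ht.2
    have : slope g s₀ t = g t / (t - s₀) := by
      rw [slope_def_field, hgs₀0]; ring_nf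
    rw [this]
    apply div_nonpos_of_nonneg_of_nonpos (le_of_lt hgt)
    linarith [ht.2]
  linarith
end

section
/- Let a, b : (0, ∞) → ℝ be continuous with a(s) = -(n-r)·tanh(s) and b(s) = b_r·tanh^{1-r}(s), where n > r ≥ 1 and b_r ∈ (0, n-r). Let τ_λ be the solution of y' = a·y + b with τ_λ(λ) = 1, where λ > 0 satisfies tanh^r(λ) > b_r/(n-r). Then τ_λ'(λ) < 0, and τ_λ is positive and strictly decreasing on [λ, ∞), with 0 < τ_λ(s) ≤ 1 for all s ≥ λ. -/
/-!
With `k = n - r`, the equation reads `τ' = -h / tanh^{r-1}` for the defect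
`h = k tanh^r τ - b_r`, so `τ` decreases exactly where `h > 0`, and `h(λ) > 0` is the hypothesis
on `λ`. At a zero of `h` we have `τ' = 0`, hence `h' = k (tanh^r)' τ`, which is positive because
`tanh` increases and `k τ tanh^r = b_r > 0`. A function that is positive at `λ` and crosses every
zero upwards stays positive, so `h > 0` on `[λ, ∞)`.
-/

open Set Filter Real

namespace Real

theorem tanh_pos {x : ℝ} (hx : 0 < x) : 0 < tanh x := by
  rw [tanh_eq_sinh_div_cosh]
  exact div_pos (sinh_pos_iff.mpr hx) (cosh_pos x)

theorem hasDerivAt_tanh (x : ℝ) : HasDerivAt tanh (cosh x ^ 2)⁻¹ x := by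
  have hquot := (hasDerivAt_sinh x).div (hasDerivAt_cosh x) (cosh_pos x).ne'
  rw [← sq, ← sq, cosh_sq_sub_sinh_sq, one_div] at hquot
  rwa [show tanh = sinh / cosh from funext tanh_eq_sinh_div_cosh]

end Real

theorem pos_of_deriv_pos_of_eq_zero {g g' : ℝ → ℝ} {a : ℝ}
    (hg : ∀ x ∈ Ici a, HasDerivAt g (g' x) x) (ha : 0 < g a)
    (hzero : ∀ x ∈ Ioi a, g x = 0 → 0 < g' x) {x : ℝ} (hx : a ≤ x) : 0 < g x := by
  have hne : ∀ y, g y = 0 → y ≠ a := fun y hy hya => ha.ne' (hya ▸ hy)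
  have hnonneg : ∀ y ∈ Ici a, 0 ≤ g y := fun y hy =>
    image_le_of_deriv_right_lt_deriv_boundary' (f' := fun _ => 0) (b := y)
      continuousOn_const (fun _ _ => hasDerivWithinAt_const _ _ _) ha.le
      (fun z hz => (hg z hz.1).continuousAt.continuousWithinAt)
      (fun z hz => (hg z hz.1).hasDerivWithinAt)
      (fun z hz hz0 => hzero z (hz.1.lt_of_ne (hne z hz0.symm).symm) hz0.symm) ⟨hy, le_rfl⟩
  -- a zero beyond `a` would be an interior minimum of `g`, where `g' = 0`
  by_contra hneg
  have hx0 : g x = 0 := le_antisymm (not_lt.mp hneg) (hnonneg x hx)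
  have hax : a < x := hx.lt_of_ne (hne x hx0).symm
  have hmin : IsLocalMin g x :=
    eventually_of_mem (Ici_mem_nhds hax) fun y hy => hx0 ▸ hnonneg y hy
  exact (hzero x hax hx0).ne' (hmin.hasDerivAt_eq_zero (hg x hx))

section Defect

variable {k b : ℝ} {r : ℕ} {τ : ℝ → ℝ}

noncomputable def odeDefect (k b : ℝ) (r : ℕ) (τ : ℝ → ℝ) (s : ℝ) : ℝ :=
  k * tanh s ^ r * τ s - b

theorem odeRhs_eq_neg_odeDefect_div (hr : 1 ≤ r) {s : ℝ} (hs : 0 < s) :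
    -k * tanh s * τ s + b / tanh s ^ (r - 1) = -odeDefect k b r τ s / tanh s ^ (r - 1) := by
  obtain ⟨r, rfl⟩ := Nat.exists_eq_add_of_le' hr
  have ht := (tanh_pos hs).ne'
  simp only [odeDefect, Nat.add_sub_cancel]
  field_simp
  ring

theorem hasDerivAt_odeDefect {s τ' : ℝ} (hτ : HasDerivAt τ τ' s) :
    HasDerivAt (odeDefect k b r τ)
      (k * (r * tanh s ^ (r - 1) * (cosh s ^ 2)⁻¹ * τ s + tanh s ^ r * τ')) s := by
  have hprod := ((((hasDerivAt_tanh s).fun_pow r).const_mul k).fun_mul hτ).sub_const b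
  exact hprod.congr_deriv (by ring)

theorem odeDefect_pos (hr : 1 ≤ r) (hb : 0 < b) {a : ℝ} (ha : 0 < a)
    (hode : ∀ s > 0, HasDerivAt τ (-k * tanh s * τ s + b / tanh s ^ (r - 1)) s)
    (hpos : 0 < odeDefect k b r τ a) {s : ℝ} (hs : a ≤ s) : 0 < odeDefect k b r τ s := by
  refine pos_of_deriv_pos_of_eq_zero
    (fun x hx => hasDerivAt_odeDefect (hode x (ha.trans_le hx))) hpos ?_ hs
  intro x hx hzero
  have hx0 : 0 < x := ha.trans hx
  have ht := tanh_pos hx0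
  have hkτ : 0 < k * τ x := by
    have : k * τ x * tanh x ^ r = b := by simp only [odeDefect] at hzero; linarith
    exact pos_of_mul_pos_left (this ▸ hb) (pow_pos ht r).le
  rw [odeRhs_eq_neg_odeDefect_div hr hx0, hzero, neg_zero, zero_div, mul_zero, add_zero]
  have hr0 : (0 : ℝ) < r := by exact_mod_cast hr
  calc 0 < r * tanh x ^ (r - 1) * (cosh x ^ 2)⁻¹ * (k * τ x) :=
        mul_pos (mul_pos (mul_pos hr0 (pow_pos ht _)) (by positivity)) hkτ
    _ = _ := by ring

end Defect

theorem stmt_13_general (n r : ℕ) (hr : 1 ≤ r) (hrn : r < n)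
    (b_r : ℝ) (hbr : 0 < b_r)
    (lam : ℝ) (hlam : 0 < lam)
    (hlam2 : Real.tanh lam ^ r > b_r / ((n:ℝ) - r))
    (τ : ℝ → ℝ)
    (hode : ∀ s > (0:ℝ), HasDerivAt τ
      (-((n:ℝ) - r) * Real.tanh s * τ s + b_r / Real.tanh s ^ (r - 1)) s)
    (hτlam : τ lam = 1) :
    deriv τ lam < 0 ∧ StrictAntiOn τ (Set.Ici lam) ∧
    ∀ s ≥ lam, 0 < τ s ∧ τ s ≤ 1 := by
  set k : ℝ := (n : ℝ) - r
  have hk : 0 < k := sub_pos.mpr (by exact_mod_cast hrn)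
  have hdefect_lam : 0 < odeDefect k b_r r τ lam := by
    have := (div_lt_iff₀ hk).mp hlam2
    simp only [odeDefect, hτlam]
    linarith
  have hdefect : ∀ s ≥ lam, 0 < odeDefect k b_r r τ s :=
    fun s hs => odeDefect_pos hr hbr hlam hode hdefect_lam hs
  have hderiv : ∀ s ≥ lam, deriv τ s < 0 := fun s hs => by
    have hs0 := hlam.trans_le hs
    rw [(hode s hs0).deriv, odeRhs_eq_neg_odeDefect_div hr hs0, neg_div]
    exact neg_neg_of_pos (div_pos (hdefect s hs) (pow_pos (tanh_pos hs0) _))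
  have hanti : StrictAntiOn τ (Ici lam) :=
    strictAntiOn_of_deriv_neg (convex_Ici lam)
      (fun x hx => (hode x (hlam.trans_le hx)).continuousAt.continuousWithinAt)
      (fun x hx => hderiv x (interior_subset hx))
  refine ⟨hderiv lam le_rfl, hanti,
    fun s hs => ⟨?_, hτlam ▸ hanti.antitoneOn self_mem_Ici hs hs⟩⟩
  have hkt : 0 ≤ k * tanh s ^ r := (mul_pos hk (pow_pos (tanh_pos (hlam.trans_le hs)) r)).le
  have hprod : b_r < k * tanh s ^ r * τ s := sub_pos.mp (hdefect s hs)
  exact pos_of_mul_pos_right (hbr.trans hprod) hkt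

/-- For the ODE y' = -(n-r)tanh(s)·y + b_r·tanh^{1-r}(s) with 0 < b_r < n-r, if
tanh^r(λ) > b_r/(n-r) and τ_λ solves the ODE with τ_λ(λ) = 1, then τ_λ'(λ) < 0 and
τ_λ is positive and strictly decreasing on [λ,∞), with 0 < τ_λ ≤ 1 there. -/
theorem stmt_13 (n r : ℕ) (hr : 1 ≤ r) (hrn : r < n)
    (b_r : ℝ) (hbr : 0 < b_r) (hbr2 : b_r < (n:ℝ) - r)
    (lam : ℝ) (hlam : 0 < lam)
    (hlam2 : Real.tanh lam ^ r > b_r / ((n:ℝ) - r))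
    (τ : ℝ → ℝ)
    (hode : ∀ s > (0:ℝ), HasDerivAt τ
      (-((n:ℝ) - r) * Real.tanh s * τ s + b_r / Real.tanh s ^ (r - 1)) s)
    (hτlam : τ lam = 1) :
    deriv τ lam < 0 ∧ StrictAntiOn τ (Set.Ici lam) ∧
    ∀ s ≥ lam, 0 < τ s ∧ τ s ≤ 1 :=
  stmt_13_general n r hr hrn b_r hbr lam hlam hlam2 τ hode hτlam
end

section
/- Let a : (0, ∞) → ℝ be continuous, negative, increasing with inf |a| > 0, and let b : (0, ∞) → ℝ be continuous, positive. Define μ(s) = exp(-∫_{s₀}^s a(u) du) for fixed s₀ > 0. Then μ(s) → +∞ as s → +∞, and if moreover b(s)/(-a(s)) → L as s → ∞, then every solution τ(s) = (1/μ(s))·(τ₀ + ∫_{s₀}^s b(u)μ(u) du) of τ' = aτ + b satisfies lim_{s→∞} τ(s) = L. -/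
open Set Filter

/-- For a continuous, negative, increasing a with inf|a| > 0 and continuous positive b,
the weight μ(s) = exp(-∫_{s₀}^s a) tends to +∞, and if b/(-a) → L then every solution
τ(s) = (1/μ(s))·(τ₀ + ∫_{s₀}^s b·μ) of τ' = aτ + b tends to L as s → ∞. -/
theorem stmt_15 (a b : ℝ → ℝ) (s₀ : ℝ) (hs₀ : 0 < s₀)
    (ha_cont : ContinuousOn a (Set.Ioi 0)) (hb_cont : ContinuousOn b (Set.Ioi 0))
    (ha_neg : ∀ s > (0:ℝ), a s < 0)
    (ha_mono : MonotoneOn a (Set.Ioi 0))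
    (c : ℝ) (hc : 0 < c) (hinf : ∀ s > (0:ℝ), c ≤ |a s|)
    (hb_pos : ∀ s > (0:ℝ), 0 < b s)
    (μ : ℝ → ℝ) (hμ : ∀ s, μ s = Real.exp (-(∫ u in s₀..s, a u))) :
    Tendsto μ atTop atTop ∧
    ∀ L : ℝ, Tendsto (fun s => b s / (-a s)) atTop (nhds L) →
      ∀ (τ₀ : ℝ) (τ : ℝ → ℝ),
        (∀ s, τ s = (1 / μ s) * (τ₀ + ∫ u in s₀..s, b u * μ u)) →
        Tendsto τ atTop (nhds L) := by
  -- basic facts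
  have hμpos : ∀ s, 0 < μ s := by
    intro s; rw [hμ s]; exact Real.exp_pos _
  have hsub : ∀ x y : ℝ, 0 < x → 0 < y → Set.uIcc x y ⊆ Set.Ioi 0 := by
    intro x y hx hy t ht
    exact lt_of_lt_of_le (lt_min hx hy) ht.1
  have haI : ∀ x y : ℝ, 0 < x → 0 < y → IntervalIntegrable a MeasureTheory.volume x y :=
    fun x y hx hy => (ha_cont.mono (hsub x y hx hy)).intervalIntegrable
  have ha_le : ∀ u : ℝ, 0 < u → a u ≤ -c := by
    intro u hu
    have h1 := hinf u hu
    have h2 := ha_neg u hu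
    rw [abs_of_neg h2] at h1
    linarith
  -- derivative of μ
  have hFderiv : ∀ t : ℝ, 0 < t → HasDerivAt (fun s => ∫ u in s₀..s, a u) (a t) t := by
    intro t ht
    exact intervalIntegral.integral_hasDerivAt_right (haI s₀ t hs₀ ht)
      (ha_cont.stronglyMeasurableAtFilter isOpen_Ioi t ht)
      (ha_cont.continuousAt (Ioi_mem_nhds ht))
  have hμderiv : ∀ t : ℝ, 0 < t → HasDerivAt μ ((-(a t)) * μ t) t := by
    intro t ht
    have h1 : HasDerivAt (fun s => Real.exp (-(∫ u in s₀..s, a u)))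
        (Real.exp (-(∫ u in s₀..t, a u)) * (-(a t))) t := ((hFderiv t ht).neg).exp
    have h2 : μ =ᶠ[nhds t] (fun s => Real.exp (-(∫ u in s₀..s, a u))) :=
      Filter.Eventually.of_forall hμ
    have h3 := h1.congr_of_eventuallyEq h2
    rw [hμ t, mul_comm]
    exact h3
  have hμcont : ContinuousOn μ (Set.Ioi 0) :=
    fun t ht => ((hμderiv t ht).continuousAt).continuousWithinAt
  have hbμI : ∀ x y : ℝ, 0 < x → 0 < y →
      IntervalIntegrable (fun u => b u * μ u) MeasureTheory.volume x y :=
    fun x y hx hy => ((hb_cont.mul hμcont).mono (hsub x y hx hy)).intervalIntegrable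
  have haμI : ∀ x y : ℝ, 0 < x → 0 < y →
      IntervalIntegrable (fun u => (-(a u)) * μ u) MeasureTheory.volume x y :=
    fun x y hx hy => (((ha_cont.neg).mul hμcont).mono (hsub x y hx hy)).intervalIntegrable
  -- part 1 : μ → ∞
  have hlow : ∀ s : ℝ, s₀ ≤ s → Real.exp (c * (s - s₀)) ≤ μ s := by
    intro s hs
    rw [hμ s]
    apply Real.exp_le_exp.2
    have h1 : (∫ u in s₀..s, a u) ≤ ∫ _u in s₀..s, (-c) := by
      apply intervalIntegral.integral_mono_on hs (haI s₀ s hs₀ (hs₀.trans_le hs))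
        intervalIntegrable_const
      intro u hu
      exact ha_le u (hs₀.trans_le hu.1)
    rw [intervalIntegral.integral_const, smul_eq_mul] at h1
    nlinarith
  have hμtop : Tendsto μ atTop atTop := by
    apply tendsto_atTop_mono' atTop
      (eventually_atTop.2 ⟨s₀, fun s hs => hlow s hs⟩)
    apply Real.tendsto_exp_atTop.comp
    exact (tendsto_atTop_add_const_right atTop (-s₀) tendsto_id).const_mul_atTop hc
  refine ⟨hμtop, ?_⟩
  -- part 2
  intro L hL τ₀ τ hτ
  rw [Metric.tendsto_atTop]
  intro ε hε
  have hε' : (0:ℝ) < ε / 3 := by linarith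
  obtain ⟨N₀, hN₀⟩ := Metric.tendsto_atTop.1 hL (ε / 3) hε'
  set S : ℝ := max N₀ (s₀ + 1) with hSdef
  have hSpos : 0 < S := lt_of_lt_of_le (by linarith) (le_max_right _ _)
  have hSs₀ : s₀ ≤ S := le_trans (by linarith) (le_max_right _ _)
  set C : ℝ := τ₀ + (∫ u in s₀..S, b u * μ u) - L * μ S with hCdef
  obtain ⟨N₁, hN₁⟩ := eventually_atTop.1 (hμtop.eventually_ge_atTop (|C| / (ε / 3) + 1))
  refine ⟨max S N₁, fun s hs => ?_⟩
  have hsS : S ≤ s := le_trans (le_max_left _ _) hs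
  have hspos : 0 < s := lt_of_lt_of_le hSpos hsS
  have hμs : 0 < μ s := hμpos s
  have hμS : 0 < μ S := hμpos S
  have hμbig : |C| / (ε / 3) + 1 ≤ μ s := hN₁ s (le_trans (le_max_right _ _) hs)
  have hpos' : ∀ u : ℝ, u ∈ Set.Icc S s → 0 < u :=
    fun u hu => lt_of_lt_of_le hSpos hu.1
  -- FTC: ∫_S^s (-a)·μ = μ s - μ S
  have hFTC : (∫ u in S..s, (-(a u)) * μ u) = μ s - μ S := by
    apply intervalIntegral.integral_eq_sub_of_hasDerivAt
    · intro t ht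
      have : 0 < t := by
        rcases ht with ⟨h1, _⟩
        exact lt_of_lt_of_le (lt_min hSpos hspos) h1
      exact hμderiv t this
    · exact haμI S s hSpos hspos
  -- key estimate
  set D : ℝ := (∫ u in S..s, b u * μ u) - L * (μ s - μ S) with hDdef
  have hkey : |D| ≤ ε / 3 * (μ s - μ S) := by
    have hrw : D = ∫ u in S..s, (b u * μ u - L * ((-(a u)) * μ u)) := by
      rw [intervalIntegral.integral_sub (hbμI S s hSpos hspos)
        ((haμI S s hSpos hspos).const_mul L), intervalIntegral.integral_const_mul, hFTC]
    have hptU : ∀ u ∈ Set.Icc S s,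
        b u * μ u - L * ((-(a u)) * μ u) ≤ ε / 3 * ((-(a u)) * μ u) := by
      intro u hu
      have hu0 := hpos' u hu
      have hau := ha_neg u hu0
      have hμu := hμpos u
      have hdist : |b u / (-(a u)) - L| < ε / 3 := by
        have := hN₀ u (le_trans (le_max_left _ _) hu.1)
        rwa [Real.dist_eq] at this
      have hne : -(a u) ≠ 0 := ne_of_gt (by linarith)
      have hbu : b u / -(a u) * -(a u) = b u := div_mul_cancel₀ _ hne
      have heq : (b u / (-(a u)) - L) * ((-(a u)) * μ u)
          = b u * μ u - L * ((-(a u)) * μ u) := by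
        rw [sub_mul, ← mul_assoc, hbu]
      have hg : 0 ≤ (-(a u)) * μ u := mul_nonneg (by linarith) (le_of_lt hμu)
      have h1 : (b u / (-(a u)) - L) ≤ ε / 3 := le_of_lt (lt_of_le_of_lt (le_abs_self _) hdist)
      calc b u * μ u - L * ((-(a u)) * μ u)
          = (b u / (-(a u)) - L) * ((-(a u)) * μ u) := heq.symm
        _ ≤ ε / 3 * ((-(a u)) * μ u) := mul_le_mul_of_nonneg_right h1 hg
    have hptL : ∀ u ∈ Set.Icc S s,
        -(ε / 3 * ((-(a u)) * μ u)) ≤ b u * μ u - L * ((-(a u)) * μ u) := by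
      intro u hu
      have hu0 := hpos' u hu
      have hau := ha_neg u hu0
      have hμu := hμpos u
      have hdist : |b u / (-(a u)) - L| < ε / 3 := by
        have := hN₀ u (le_trans (le_max_left _ _) hu.1)
        rwa [Real.dist_eq] at this
      have hne : -(a u) ≠ 0 := ne_of_gt (by linarith)
      have hbu : b u / -(a u) * -(a u) = b u := div_mul_cancel₀ _ hne
      have heq : (b u / (-(a u)) - L) * ((-(a u)) * μ u)
          = b u * μ u - L * ((-(a u)) * μ u) := by
        rw [sub_mul, ← mul_assoc, hbu]
      have hg : 0 ≤ (-(a u)) * μ u := mul_nonneg (by linarith) (le_of_lt hμu)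
      have h1 : -(ε / 3) ≤ (b u / (-(a u)) - L) := by
        have := (abs_lt.1 hdist).1; linarith
      calc -(ε / 3 * ((-(a u)) * μ u)) = -(ε / 3) * ((-(a u)) * μ u) := by ring
        _ ≤ (b u / (-(a u)) - L) * ((-(a u)) * μ u) := mul_le_mul_of_nonneg_right h1 hg
        _ = b u * μ u - L * ((-(a u)) * μ u) := heq
    have hintSub : IntervalIntegrable (fun u => b u * μ u - L * ((-(a u)) * μ u))
        MeasureTheory.volume S s :=
      (hbμI S s hSpos hspos).sub ((haμI S s hSpos hspos).const_mul L)
    have hintE : IntervalIntegrable (fun u => ε / 3 * ((-(a u)) * μ u))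
        MeasureTheory.volume S s := (haμI S s hSpos hspos).const_mul (ε / 3)
    have hup : (∫ u in S..s, (b u * μ u - L * ((-(a u)) * μ u)))
        ≤ ε / 3 * (μ s - μ S) := by
      calc (∫ u in S..s, (b u * μ u - L * ((-(a u)) * μ u)))
          ≤ ∫ u in S..s, ε / 3 * ((-(a u)) * μ u) :=
            intervalIntegral.integral_mono_on hsS hintSub hintE hptU
        _ = ε / 3 * (μ s - μ S) := by
            rw [intervalIntegral.integral_const_mul, hFTC]
    have hlo : -(ε / 3 * (μ s - μ S))
        ≤ (∫ u in S..s, (b u * μ u - L * ((-(a u)) * μ u))) := by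
      have : (∫ u in S..s, -(ε / 3 * ((-(a u)) * μ u)))
          ≤ ∫ u in S..s, (b u * μ u - L * ((-(a u)) * μ u)) :=
        intervalIntegral.integral_mono_on hsS hintE.neg hintSub hptL
      rwa [intervalIntegral.integral_neg, intervalIntegral.integral_const_mul, hFTC] at this
    rw [hrw]
    exact abs_le.2 ⟨hlo, hup⟩
  -- assemble
  have hsplit : (∫ u in s₀..s, b u * μ u)
      = (∫ u in s₀..S, b u * μ u) + ∫ u in S..s, b u * μ u :=
    (intervalIntegral.integral_add_adjacent_intervals (hbμI s₀ S hs₀ hSpos)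
      (hbμI S s hSpos hspos)).symm
  have hτs : τ s - L = (C + D) / μ s := by
    rw [hτ s, hsplit, hCdef, hDdef]
    field_simp
    ring
  rw [Real.dist_eq, hτs, abs_div, abs_of_pos hμs, div_lt_iff₀ hμs]
  have h1 : |C + D| ≤ |C| + |D| := abs_add_le _ _
  have hCb : |C| ≤ (μ s - 1) * (ε / 3) := by
    rw [← div_le_iff₀ hε']
    linarith
  have h2 : |D| ≤ ε / 3 * (μ s - μ S) := hkey
  nlinarith [mul_pos hε' hμs, mul_pos hε' hμS]
end

section
/- Let a, b : (0,∞) → ℝ be continuous with a < 0, b > 0, b increasing, b(s)/(-a(s)) → L ∈ (0, 1) as s → ∞, and let τ be a solution of τ' = aτ + b with τ(0) = 0, τ > 0 and τ' > 0 on (0, ∞). Then 0 < τ(s) < 1 for all s ∈ (0, ∞); i.e., τ never reaches the value 1. -/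
open Set Filter

/-- Corollary 4.4 (second assertion): if a < 0, b > 0 with b increasing and
b/(-a) → L ∈ (0,1), then an increasing positive solution τ of τ' = aτ + b with
τ(0) = 0 satisfies 0 < τ(s) < 1 for all s > 0; i.e. τ never reaches 1. -/
theorem stmt_16 (a b τ : ℝ → ℝ) (L : ℝ) (hL : L ∈ Set.Ioo (0:ℝ) 1)
    (ha_cont : ContinuousOn a (Set.Ioi 0)) (hb_cont : ContinuousOn b (Set.Ioi 0))
    (ha_neg : ∀ s > (0:ℝ), a s < 0) (hb_pos : ∀ s > (0:ℝ), 0 < b s)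
    (hb_mono : MonotoneOn b (Set.Ioi 0))
    (hlim : Tendsto (fun s => b s / (-a s)) atTop (nhds L))
    (hτ0 : τ 0 = 0) (hτc : ContinuousOn τ (Set.Ici 0))
    (hode : ∀ s > (0:ℝ), HasDerivAt τ (a s * τ s + b s) s)
    (hpos : ∀ s > (0:ℝ), 0 < τ s)
    (hinc : ∀ s > (0:ℝ), 0 < a s * τ s + b s) :
    ∀ s > (0:ℝ), 0 < τ s ∧ τ s < 1 := by
  intro s hs
  refine ⟨hpos s hs, ?_⟩
  -- key bound: for t > 0, τ t < b t / (-a t)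
  have key : ∀ t > (0:ℝ), τ t < b t / (-a t) := by
    intro t ht
    have hat := ha_neg t ht
    rw [lt_div_iff₀ (by linarith)]
    nlinarith [hinc t ht]
  -- eventually b/(-a) < 1
  have hev : ∀ᶠ t in atTop, b t / (-a t) < 1 :=
    hlim.eventually_lt_const hL.2
  obtain ⟨M, hM⟩ := hev.exists_forall_of_atTop
  set t₁ : ℝ := max M (s + 1) with ht₁def
  have hts : s < t₁ := lt_of_lt_of_le (by linarith) (le_max_right _ _)
  have ht₁pos : 0 < t₁ := lt_trans hs hts
  have hτt₁ : τ t₁ < 1 := lt_trans (key t₁ ht₁pos) (hM t₁ (le_max_left _ _))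
  -- τ strictly monotone on Ici s
  have hmono : StrictMonoOn τ (Ici s) := by
    apply strictMonoOn_of_deriv_pos (convex_Ici s)
    · exact hτc.mono (fun x hx => le_trans hs.le hx)
    · intro x hx
      rw [interior_Ici] at hx
      have hx0 : 0 < x := lt_trans hs hx
      rw [(hode x hx0).deriv]
      exact hinc x hx0
  exact lt_trans (hmono (self_mem_Ici) (le_of_lt hts : s ≤ t₁) hts) hτt₁
end
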